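/- Let G be a group such that the quotient G/Z(G) of G by its center is finitely generated. Then the commutator subgroup [G, G] is finitely generated if and only if the commutator subgroup of G/Z(G) is finitely generated. -/

import Mathlib

/-!
Lift finite generating sets of `G/Z` and of `[G/Z, G/Z]` to finite sets `X ⊆ G` and
`C ⊆ [G, G]`, so that `G = ⟨X⟩Z` and `[G, G] ≤ ⟨C⟩Z`. The subgroup `K` generated by `C`, the
commutators `⁅x, c⁆` (`x ∈ X ∪ X⁻¹`, `c ∈ C`) and the commutators `⁅x, y⁆` (`x, y ∈ X`) lies in
`[G, G]` and is normal: `x c x⁻¹ = ⁅x, c⁆ c`, and for `k = w z ∈ K` with `w ∈ ⟨C⟩`, `z` central,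
`x k x⁻¹ = (x w x⁻¹) w⁻¹ k`. Modulo `K` the elements of `X` commute and `Z` stays central, so `G/K`
is abelian and `K = [G, G]`.
-/

open Subgroup
open scoped commutatorElement

section

variable {G G' : Type*} [Group G] [Group G']

namespace Subgroup

theorem FG.map {H : Subgroup G} (hH : H.FG) (f : G →* G') : (H.map f).FG := by
  obtain ⟨S, rfl, hS⟩ := (fg_iff H).1 hH
  exact (fg_iff _).2 ⟨f '' S, (MonoidHom.map_closure f S).symm, hS.image f⟩

theorem exists_finite_subset_le_closure_sup_ker {H : Subgroup G} {f : G →* G'}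
    (hH : (H.map f).FG) : ∃ X ⊆ (H : Set G), X.Finite ∧ H ≤ closure X ⊔ f.ker := by
  obtain ⟨S, hS, hSfin⟩ := (fg_iff _).1 hH
  have hSH : S ⊆ f '' H := by rw [← coe_map, ← hS]; exact subset_closure
  obtain ⟨X, hXH, hXfin, hX⟩ := Set.exists_subset_image_finite_and
    (p := fun T => closure T = H.map f) |>.1 ⟨S, hSH, hSfin, hS⟩
  refine ⟨X, hXH, hXfin, ?_⟩
  rw [← comap_map_eq, MonoidHom.map_closure, hX]
  exact le_comap_map f H

theorem map_center_le_center_of_surjective {f : G →* G'} (hf : Function.Surjective f) :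
    (center G).map f ≤ center G' := by
  simpa only [← centralizer_univ, Set.image_univ_of_surjective hf]
    using map_centralizer_le_centralizer_image Set.univ f

theorem center_eq_top_of_closure_sup_center_eq_top {X : Set G}
    (hX : closure X ⊔ center G = ⊤) (hcomm : ∀ x ∈ X, ∀ y ∈ X, Commute x y) :
    center G = ⊤ := by
  have hXcomm : closure X ≤ centralizer (closure X : Set G) := by
    rw [centralizer_closure, closure_le]
    exact fun x hx => mem_centralizer_iff.2 fun y hy => hcomm y hy x hx
  have hXcenter : closure X ≤ center G := by
    rw [← SetLike.coe_subset_coe, ← centralizer_eq_top_iff_subset, ← top_le_iff, ← hX]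
    exact sup_le hXcomm (center_le_centralizer _)
  exact top_le_iff.1 (hX ▸ sup_le hXcenter le_rfl)

theorem conj_mem_of_commutator_mem {K : Subgroup G} {C : Set G} {x : G} (hCK : C ⊆ K)
    (hK : K ≤ closure C ⊔ center G) (hxC : ∀ c ∈ C, ⁅x, c⁆ ∈ K) {k : G} (hk : k ∈ K) :
    x * k * x⁻¹ ∈ K := by
  have hconj : closure C ≤ K.comap (MulAut.conj x).toMonoidHom := (closure_le _).2 fun c hc => by
    simpa [commutatorElement_def] using mul_mem (hxC c hc) (hCK hc)
  obtain ⟨w, hw, z, hz, rfl⟩ := mem_sup_of_normal_right.1 (hK hk)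
  have hconj_eq : x * (w * z) * x⁻¹ = x * w * x⁻¹ * w⁻¹ * (w * z) := by
    simp only [mul_assoc, (mem_center_iff.1 hz x⁻¹).symm]; group
  rw [hconj_eq]
  exact mul_mem (mul_mem (by simpa using hconj hw) (inv_mem ((closure_le _).2 hCK hw))) hk

theorem normal_of_closure_sup_center_eq_top {K : Subgroup G} {X : Set G}
    (hX : closure X ⊔ center G = ⊤) (hXK : ∀ x ∈ X ∪ X⁻¹, ∀ k ∈ K, x * k * x⁻¹ ∈ K) :
    K.Normal := by
  rw [← normalizer_eq_top_iff, eq_top_iff, ← hX]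
  refine sup_le ((closure_le _).2 fun x hx k => ⟨hXK x (.inl hx) k, fun hk => ?_⟩)
    (center_le_normalizer _)
  simpa [mul_assoc] using hXK x⁻¹ (.inr (by simpa using hx)) _ hk

end Subgroup

theorem map_commutator_of_surjective {f : G →* G'} (hf : Function.Surjective f) :
    (commutator G).map f = commutator G' := by
  rw [commutator_def, map_commutator, map_top_of_surjective f hf, commutator_def]

theorem commutator_le_of_closure_sup_center_eq_top {N : Subgroup G} [N.Normal] {X : Set G}
    (hX : closure X ⊔ center G = ⊤) (hXN : ∀ x ∈ X, ∀ y ∈ X, ⁅x, y⁆ ∈ N) :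
    commutator G ≤ N := by
  rw [← Normal.quotient_commutative_iff_commutator_le, ← center_eq_top_iff]
  have hπ := QuotientGroup.mk'_surjective N
  refine center_eq_top_of_closure_sup_center_eq_top (X := QuotientGroup.mk' N '' X) ?_ ?_
  · rw [eq_top_iff, ← map_top_of_surjective _ hπ, ← hX, Subgroup.map_sup, MonoidHom.map_closure]
    exact sup_le_sup_left (map_center_le_center_of_surjective hπ) _
  · rintro _ ⟨x, hx, rfl⟩ _ ⟨y, hy, rfl⟩
    rw [← commutatorElement_eq_one_iff_commute, ← map_commutatorElement, QuotientGroup.mk'_apply,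
      QuotientGroup.eq_one_iff]
    exact hXN x hx y hy

theorem commutator_fg_of_le_closure_sup_center {X C : Set G} (hXfin : X.Finite) (hCfin : C.Finite)
    (hX : closure X ⊔ center G = ⊤) (hCD : C ⊆ commutator G)
    (hC : commutator G ≤ closure C ⊔ center G) : (commutator G).FG := by
  set S := C ∪ Set.image2 (⁅·, ·⁆) (X ∪ X⁻¹) C ∪ Set.image2 (⁅·, ·⁆) X X
  have hSD : closure S ≤ commutator G := by
    rw [closure_le]
    rintro _ ((hc | ⟨x, -, c, -, rfl⟩) | ⟨x, -, y, -, rfl⟩)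
    exacts [hCD hc, commutator_mem_commutator trivial trivial,
      commutator_mem_commutator trivial trivial]
  have : (closure S).Normal := normal_of_closure_sup_center_eq_top hX fun x hx _ =>
    conj_mem_of_commutator_mem (fun c hc => subset_closure (.inl (.inl hc))) (hSD.trans hC)
      fun c hc => subset_closure (.inl (.inr ⟨x, hx, c, hc, rfl⟩))
  have hDS : commutator G ≤ closure S := commutator_le_of_closure_sup_center_eq_top hX
    fun x hx y hy => subset_closure (.inr ⟨x, hx, y, hy, rfl⟩)
  have hSfin : S.Finite :=
    (hCfin.union ((hXfin.union hXfin.inv).image2 _ hCfin)).union (hXfin.image2 _ hXfin)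
  exact (fg_iff _).2 ⟨S, le_antisymm hSD hDS, hSfin⟩

end

/-- Let `G` be a group such that `G/Z(G)` is finitely generated. Then `[G, G]` is finitely
generated if and only if the commutator subgroup of `G/Z(G)` is finitely generated. -/
theorem commutator_fg_iff_commutator_quotient_center_fg
    {G : Type*} [Group G] (h : Group.FG (G ⧸ Subgroup.center G)) :
    (commutator G).FG ↔ (commutator (G ⧸ Subgroup.center G)).FG := by
  have hπ := QuotientGroup.mk'_surjective (center G)
  rw [← map_commutator_of_surjective hπ]
  refine ⟨fun hD => hD.map _, fun hDQ => ?_⟩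
  obtain ⟨X, -, hXfin, hX⟩ := exists_finite_subset_le_closure_sup_ker (H := ⊤)
    (by rwa [map_top_of_surjective _ hπ, ← Group.fg_def])
  obtain ⟨C, hCD, hCfin, hC⟩ := exists_finite_subset_le_closure_sup_ker hDQ
  rw [QuotientGroup.ker_mk'] at hX hC
  exact commutator_fg_of_le_closure_sup_center hXfin hCfin (top_le_iff.1 hX) hCD hC
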